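/- Let X = H + W where H and W are n×n real symmetric matrices, H = V D V^T with V an n×K matrix satisfying V^T V = I_K and D a K×K diagonal matrix with nonzero diagonal entries. If λ is an eigenvalue of X that is not an eigenvalue of W, then det(I_K + D V^T (W - λ I_n)^{-1} V) = 0. -/
import Mathlib


open Matrix

theorem stmt4 (n K : ℕ) (W : Matrix (Fin n) (Fin n) ℝ) (hWs : W.IsSymm)
    (V : Matrix (Fin n) (Fin K) ℝ) (d : Fin K → ℝ) (hd : ∀ k, d k ≠ 0)
    (hV : Vᵀ * V = 1) (lam : ℝ)
    (hX : ((V * Matrix.diagonal d * Vᵀ + W) - lam • 1).det = 0)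
    (hW : (W - lam • 1).det ≠ 0) :
    ((1 : Matrix (Fin K) (Fin K) ℝ)
      + Matrix.diagonal d * Vᵀ * (W - lam • 1)⁻¹ * V).det = 0 := by
  set M := W - lam • (1 : Matrix (Fin n) (Fin n) ℝ) with hM
  have hMinv : IsUnit M.det := isUnit_iff_ne_zero.mpr hW
  have hfact : (V * Matrix.diagonal d * Vᵀ + W) - lam • 1
      = M * (1 + M⁻¹ * (V * Matrix.diagonal d * Vᵀ)) := by
    rw [mul_add, mul_one, ← mul_assoc, Matrix.mul_nonsing_inv _ hMinv, one_mul]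
    rw [hM]; abel
  rw [hfact, det_mul] at hX
  have h0 : (1 + M⁻¹ * (V * Matrix.diagonal d * Vᵀ)).det = 0 := by
    rcases mul_eq_zero.mp hX with h | h
    · exact absurd h hW
    · exact h
  have : (1 + (M⁻¹ * V) * (Matrix.diagonal d * Vᵀ)).det
      = (1 + (Matrix.diagonal d * Vᵀ) * (M⁻¹ * V)).det :=
    Matrix.det_one_add_mul_comm _ _
  rw [show M⁻¹ * V * (Matrix.diagonal d * Vᵀ) = M⁻¹ * (V * Matrix.diagonal d * Vᵀ) by
    simp [Matrix.mul_assoc], h0] at this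
  rw [show (1 : Matrix (Fin K) (Fin K) ℝ) + Matrix.diagonal d * Vᵀ * M⁻¹ * V
    = 1 + (Matrix.diagonal d * Vᵀ) * (M⁻¹ * V) by simp [Matrix.mul_assoc]]
  exact this.symm
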